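/- For every row index j ∈ {1,…,k}, the expectation of the entry in row j of the decoded query column of a Q&A user satisfies E[Q(j, A)] = ((2m − 2mλ − 1)/(2m−1))·θ_j·μ₁(j), where μ₁(j) = Σ_{v∈V} v·p_j(v) is the conditional mean of a user's value given group j. -/
import Mathlib


open scoped BigOperators

noncomputable section

/-- The value alphabet `V = {±1, …, ±m} ⊆ ℤ`. -/
def Vset (m : ℕ) : Finset ℤ := (Finset.Icc (-(m : ℤ)) m).erase 0

/-- Values as a (finite) type. -/
abbrev Vt (m : ℕ) : Type := {v : ℤ // v ∈ Vset m}

/-- Query matrices: `k × 2m` matrices whose rows are permutations of `V`,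
encoded row-wise as equivalences between column indices and values. -/
abbrev Query (k m : ℕ) : Type := Fin k → (Fin (2*m) ≃ Vt m)

/-- The randomized response channel `RR_λ` on `V`: probability that input `v`
is turned into output `w`. -/
def RR (m : ℕ) (lam : ℝ) (v w : Vt m) : ℝ :=
  if w = v then 1 - lam else lam / (2*m - 1)
lemma mem_Vset {m : ℕ} {v : ℤ} : v ∈ Vset m ↔ v ≠ 0 ∧ -(m:ℤ) ≤ v ∧ v ≤ m := by
  simp [Vset, Finset.mem_erase, Finset.mem_Icc]

def negV (m : ℕ) : Vt m ≃ Vt m where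
  toFun v := ⟨-v.1, by have := v.2; simp only [mem_Vset] at this ⊢; omega⟩
  invFun v := ⟨-v.1, by have := v.2; simp only [mem_Vset] at this ⊢; omega⟩
  left_inv v := by ext; simp
  right_inv v := by ext; simp

@[simp] lemma negV_val {m : ℕ} (v : Vt m) : ((negV m v : Vt m) : ℤ) = -(v : ℤ) := rfl

lemma card_Vt (m : ℕ) (hm : 0 < m) : Fintype.card (Vt m) = 2*m := by
  rw [Fintype.card_coe]
  have h0 : (0:ℤ) ∈ Finset.Icc (-(m:ℤ)) m := by simp [Finset.mem_Icc]
  rw [Vset, Finset.card_erase_of_mem h0, Int.card_Icc]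
  omega

lemma sum_Vt_zero (m : ℕ) : ∑ v : Vt m, ((v : ℤ) : ℝ) = 0 := by
  have h : ∑ v : Vt m, ((v : ℤ) : ℝ) = ∑ x ∈ Vset m, (x : ℝ) := by
    rw [← Finset.sum_coe_sort (Vset m) (fun x => (x:ℝ))]
  rw [h]
  have g_mem : ∀ a ∈ Vset m, -a ∈ Vset m := by
    intro a ha; simp only [mem_Vset] at ha ⊢; omega
  refine Finset.sum_involution (fun x _ => -x) ?_ ?_ (fun a ha => g_mem a ha) ?_
  · intro a _; push_cast; ring
  · intro a ha h he
    have he' : -a = a := he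
    simp only [mem_Vset] at ha; omega
  · intro a _; ring

/-- involution flipping row j of a query by negation -/
def flipRow {k m : ℕ} (j : Fin k) (q : Query k m) : Query k m :=
  fun i => if i = j then (q i).trans (negV m) else q i

lemma flipRow_invol {k m : ℕ} (j : Fin k) : Function.Involutive (flipRow (m := m) j) := by
  intro q; funext i
  by_cases hi : i = j
  · subst hi
    ext x
    simp [flipRow]
  · simp [flipRow, hi]

lemma sum_q_ne {k m : ℕ} {g j : Fin k} (hgj : g ≠ j) (w : Vt m) :
    ∑ q : Query k m, ((q j ((q g).symm w) : ℤ) : ℝ) = 0 := by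
  set F : Query k m → ℝ := fun q => ((q j ((q g).symm w) : ℤ) : ℝ) with hF
  have e : Equiv.Perm (Query k m) := (flipRow_invol (m := m) j).toPerm _
  have h1 : ∑ q : Query k m, F ((flipRow_invol (m := m) j).toPerm _ q) = ∑ q, F q :=
    Equiv.sum_comp _ F
  have h2 : ∀ q : Query k m, F (flipRow j q) = - F q := by
    intro q
    have hg : (flipRow j q) g = q g := by simp [flipRow, hgj]
    have hj : (flipRow j q) j = (q j).trans (negV m) := by simp [flipRow]
    simp only [hF, hg, hj, Equiv.trans_apply, negV_val]
    push_cast; ring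
  have h3 : ∑ q : Query k m, F q = - ∑ q : Query k m, F q := by
    conv_lhs => rw [← h1]
    simp only [Function.Involutive.coe_toPerm]
    rw [Finset.sum_congr rfl (fun q _ => h2 q), Finset.sum_neg_distrib]
  linarith

lemma sum_RR_mul (m : ℕ) (hm : 0 < m) (lam : ℝ) (v0 : Vt m) :
    ∑ w : Vt m, RR m lam v0 w * ((w : ℤ) : ℝ)
      = ((2*m - 2*m*lam - 1) / (2*m - 1)) * ((v0 : ℤ) : ℝ) := by
  have h2m : (2*(m:ℝ) - 1) ≠ 0 := by
    have : (1:ℝ) ≤ m := by exact_mod_cast hm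
    nlinarith
  have hsplit : ∀ w : Vt m,
      RR m lam v0 w * ((w : ℤ) : ℝ)
        = (lam / (2*m - 1)) * ((w : ℤ) : ℝ)
          + (if w = v0 then ((1 - lam) - lam / (2*(m:ℝ) - 1)) * ((v0 : ℤ) : ℝ) else 0) := by
    intro w
    by_cases h : w = v0
    · subst h; simp [RR]; ring
    · simp [RR, h]
  rw [Finset.sum_congr rfl (fun w _ => hsplit w), Finset.sum_add_distrib,
    ← Finset.mul_sum, sum_Vt_zero, Finset.sum_ite_eq' Finset.univ v0]
  simp only [Finset.mem_univ, if_pos, mul_zero, zero_add]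
  have key : (1 - lam) - lam / (2*(m:ℝ) - 1) = (2*m - 2*m*lam - 1) / (2*(m:ℝ) - 1) := by
    field_simp
    ring
  rw [key]


/-- For every row `j`, the expectation of the decoded
query-column entry of a Q&A user satisfies
`E[Q(j,A)] = ((2m − 2mλ − 1)/(2m−1))·θ_j·μ₁(j)`, with
`μ₁(j) = Σ_{v∈V} v·p_j(v)`. The expectation is over the joint model:
`G ~ θ`, `V ~ p_G`, `Q` uniform on `𝒬`, `V̊ = RR_λ(V)`, `A` the column of
row `G` of `Q` containing `V̊`. -/
theorem stmt5 (m k : ℕ) (hm : 0 < m) (hk : 2 ≤ k)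
    (p : Fin k → Vt m → ℝ)
    (hpsum : ∀ g, ∑ v : Vt m, p g v = 1)
    (hp : ∀ g v, 0 < p g v ∧ p g v < 1)
    (θ : Fin k → ℝ) (hθ0 : ∀ g, 0 ≤ θ g) (hθ1 : ∑ g, θ g = 1)
    (lam : ℝ) (hlam0 : 0 ≤ lam) (hlam1 : lam < 1 - 1/(2*m))
    (j : Fin k) :
    (∑ g : Fin k, ∑ v0 : Vt m, ∑ q : Query k m, ∑ w : Vt m,
        θ g * p g v0 * (1 / (Fintype.card (Query k m) : ℝ)) * RR m lam v0 w *
          ((q j ((q g).symm w) : ℤ) : ℝ))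
      = ((2*m - 2*m*lam - 1) / (2*m - 1)) * θ j *
          (∑ v : Vt m, ((v : ℤ) : ℝ) * p j v) := by
  have hne : Nonempty (Fin (2*m) ≃ Vt m) :=
    ⟨(Fintype.equivFinOfCardEq (card_Vt m hm)).symm⟩
  have hQne : Nonempty (Query k m) := ⟨fun _ => hne.some⟩
  have hc : ((Fintype.card (Query k m) : ℝ)) ≠ 0 := by
    exact_mod_cast Fintype.card_ne_zero
  rw [Fintype.sum_eq_single j]
  · -- main term
    have step1 : ∀ v0 : Vt m,
        (∑ q : Query k m, ∑ w : Vt m,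
          θ j * p j v0 * (1 / (Fintype.card (Query k m) : ℝ)) * RR m lam v0 w *
            ((q j ((q j).symm w) : ℤ) : ℝ))
        = θ j * p j v0 * (((2*m - 2*m*lam - 1) / (2*(m:ℝ) - 1)) * ((v0 : ℤ) : ℝ)) := by
      intro v0
      simp only [Equiv.apply_symm_apply]
      rw [Finset.sum_const, Finset.card_univ, nsmul_eq_mul]
      rw [← sum_RR_mul m hm lam v0, Finset.mul_sum, Finset.mul_sum]
      refine Finset.sum_congr rfl fun w _ => ?_
      field_simp
    rw [Finset.sum_congr rfl (fun v0 _ => step1 v0)]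
    rw [Finset.mul_sum]
    refine Finset.sum_congr rfl fun v0 _ => ?_
    ring
  · -- other groups vanish
    intro g hgj
    refine Finset.sum_eq_zero fun v0 _ => ?_
    rw [Finset.sum_comm]
    refine Finset.sum_eq_zero fun w _ => ?_
    rw [← Finset.mul_sum, sum_q_ne hgj w, mul_zero]
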